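/- arXiv:2004.02244 — 2 statements merged into one kernel-verified Lean document; each statement's English description precedes it below -/
import Mathlib

section
/- Every solution x of the sparse LCP (x ∈ sol(M,q) with ‖x‖₀ ≤ s) is a stationary point of the sparsity constrained problem min f_r(x) subject to ‖x‖₀ ≤ s; i.e., ∇f_r(x) = 0 holds at x, which in particular satisfies the stationarity conditions (∇_T f_r(x) = 0 for T = supp(x) when ‖x‖₀ = s, and ∇f_r(x) = 0 when ‖x‖₀ < s). -/
open Matrix

noncomputable def phi (r a b : ℝ) : ℝ :=
  (1 / r) * ((max a 0) ^ r * (max b 0) ^ r + (max (-a) 0) ^ r + (max (-b) 0) ^ r)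

/-- The merit function `f_r(x) = Σᵢ φ_r(xᵢ, (Mx+q)ᵢ)`. -/
noncomputable def fr {n : ℕ} (r : ℝ) (M : Matrix (Fin n) (Fin n) ℝ) (q : Fin n → ℝ)
    (x : Fin n → ℝ) : ℝ :=
  ∑ i, phi r (x i) (M.mulVec x i + q i)

/-- The solution set of the LCP. -/
def solSet {n : ℕ} (M : Matrix (Fin n) (Fin n) ℝ) (q : Fin n → ℝ) : Set (Fin n → ℝ) :=
  {x | (∀ i, 0 ≤ x i) ∧ (∀ i, 0 ≤ M.mulVec x i + q i) ∧
       ∑ i, x i * (M.mulVec x i + q i) = 0}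

/-- The number of nonzero entries of a vector. -/
noncomputable def zeroNorm {n : ℕ} (x : Fin n → ℝ) : ℕ :=
  (Finset.univ.filter (fun i => x i ≠ 0)).card

/-! At a solution every term of `∇f_r` has a vanishing factor: `x` and `Mx+q` are nonnegative and
complementary, and for `r > 1` the map `t ↦ (t₊)^r` is differentiable with derivative `r (t₊)^(r-1)`,
which vanishes, together with the map itself, on `t ≤ 0`. -/

lemma hasDerivAt_max_zero_rpow {r : ℝ} (hr : 1 < r) (t : ℝ) :
    HasDerivAt (fun t : ℝ => max t 0 ^ r) (r * max t 0 ^ (r - 1)) t := by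
  have hr0 : r - 1 ≠ 0 := by linarith
  have off_zero : ∀ t : ℝ, t ≠ 0 →
      HasDerivAt (fun t : ℝ => max t 0 ^ r) (r * max t 0 ^ (r - 1)) t := by
    intro t ht
    rcases ht.lt_or_gt with hneg | hpos
    · rw [max_eq_right hneg.le, Real.zero_rpow hr0, mul_zero]
      refine (hasDerivAt_const t ((0 : ℝ) ^ r)).congr_of_eventuallyEq ?_
      filter_upwards [Iio_mem_nhds hneg] with s hs
      rw [max_eq_right (Set.mem_Iio.mp hs).le]
    · rw [max_eq_left hpos.le]
      refine (Real.hasDerivAt_rpow_const (Or.inl hpos.ne')).congr_of_eventuallyEq ?_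
      filter_upwards [Ioi_mem_nhds hpos] with s hs
      rw [max_eq_left (Set.mem_Ioi.mp hs).le]
  rcases eq_or_ne t 0 with rfl | ht
  · have hpos : ContinuousAt (fun t : ℝ => max t 0) 0 :=
      (continuous_id.max continuous_const).continuousAt
    exact hasDerivAt_of_hasDerivAt_of_ne off_zero (hpos.rpow_const (Or.inr (by linarith)))
      (continuousAt_const.mul (hpos.rpow_const (Or.inr (by linarith))))
  · exact off_zero t ht

section Composition

variable {E : Type*} [NormedAddCommGroup E] [NormedSpace ℝ E] {r : ℝ} {x : E}

lemma HasFDerivAt.max_zero_rpow_of_nonpos {f : E → ℝ} {f' : E →L[ℝ] ℝ} (hf : HasFDerivAt f f' x)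
    (hr : 1 < r) (hx : f x ≤ 0) : HasFDerivAt (fun z => max (f z) 0 ^ r) (0 : E →L[ℝ] ℝ) x := by
  have h := (hasDerivAt_max_zero_rpow hr (f x)).comp_hasFDerivAt x hf
  rwa [max_eq_right hx, Real.zero_rpow (by linarith), mul_zero, zero_smul] at h

lemma hasFDerivAt_max_zero_rpow_mul_of_eq_zero {u v : E → ℝ} (hu : DifferentiableAt ℝ u x)
    (hv : DifferentiableAt ℝ v x) (hr : 1 < r) (hux : u x = 0) :
    HasFDerivAt (fun z => max (u z) 0 ^ r * max (v z) 0 ^ r) (0 : E →L[ℝ] ℝ) x := by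
  have hU := hu.hasFDerivAt.max_zero_rpow_of_nonpos hr hux.le
  have hV := (hasDerivAt_max_zero_rpow hr (v x)).comp_hasFDerivAt x hv.hasFDerivAt
  simpa [hux, Real.zero_rpow (by linarith : r ≠ 0)] using hU.fun_mul hV

lemma hasFDerivAt_phi_eq_zero {u v : E → ℝ} (hu : DifferentiableAt ℝ u x)
    (hv : DifferentiableAt ℝ v x) (hr : 1 < r) (hux : 0 ≤ u x) (hvx : 0 ≤ v x)
    (huv : u x * v x = 0) : HasFDerivAt (fun z => phi r (u z) (v z)) (0 : E →L[ℝ] ℝ) x := by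
  have hprod : HasFDerivAt (fun z => max (u z) 0 ^ r * max (v z) 0 ^ r) (0 : E →L[ℝ] ℝ) x := by
    rcases mul_eq_zero.mp huv with h | h
    · exact hasFDerivAt_max_zero_rpow_mul_of_eq_zero hu hv hr h
    · simpa only [mul_comm] using hasFDerivAt_max_zero_rpow_mul_of_eq_zero hv hu hr h
  have hnu := hu.hasFDerivAt.neg.max_zero_rpow_of_nonpos hr (neg_nonpos.mpr hux)
  have hnv := hv.hasFDerivAt.neg.max_zero_rpow_of_nonpos hr (neg_nonpos.mpr hvx)
  simpa [phi] using ((hprod.add hnu).add hnv).const_mul (1 / r)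

end Composition

lemma mul_eq_zero_of_mem_solSet {n : ℕ} {M : Matrix (Fin n) (Fin n) ℝ} {q x : Fin n → ℝ}
    (hx : x ∈ solSet M q) (i : Fin n) : x i * (M.mulVec x i + q i) = 0 :=
  (Finset.sum_eq_zero_iff_of_nonneg (fun j _ => mul_nonneg (hx.1 j) (hx.2.1 j))).mp hx.2.2 i
    (Finset.mem_univ i)

lemma hasFDerivAt_fr_eq_zero_of_mem_solSet {n : ℕ} {r : ℝ} (hr : 1 < r)
    {M : Matrix (Fin n) (Fin n) ℝ} {q x : Fin n → ℝ} (hx : x ∈ solSet M q) :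
    HasFDerivAt (fr r M q) (0 : (Fin n → ℝ) →L[ℝ] ℝ) x := by
  have hterm : ∀ i ∈ Finset.univ,
      HasFDerivAt (fun z => phi r (z i) (M.mulVec z i + q i)) (0 : (Fin n → ℝ) →L[ℝ] ℝ) x := by
    intro i _
    have hMq : DifferentiableAt ℝ (fun z : Fin n → ℝ => M.mulVec z i + q i) x := by
      simp only [Matrix.mulVec, dotProduct]
      fun_prop
    exact hasFDerivAt_phi_eq_zero (differentiableAt_apply i x) hMq hr (hx.1 i) (hx.2.1 i)
      (mul_eq_zero_of_mem_solSet hx i)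
  have hsum := HasFDerivAt.fun_sum hterm
  rw [Finset.sum_const_zero] at hsum
  exact hsum

theorem stmt_17_general {n : ℕ} (r : ℝ) (hr : 2 ≤ r)
    (M : Matrix (Fin n) (Fin n) ℝ) (q : Fin n → ℝ)
    (x : Fin n → ℝ) (hx : x ∈ solSet M q) :
    fderiv ℝ (fr r M q) x = 0 :=
  (hasFDerivAt_fr_eq_zero_of_mem_solSet (by linarith) hx).fderiv

theorem stmt_17 {n : ℕ} (s : ℕ) (r : ℝ) (hr : 2 ≤ r)
    (M : Matrix (Fin n) (Fin n) ℝ) (q : Fin n → ℝ)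
    (x : Fin n → ℝ) (hx : x ∈ solSet M q) (hxs : zeroNorm x ≤ s) :
    fderiv ℝ (fr r M q) x = 0 :=
  stmt_17_general r hr M q x hx
end

section
/- Assume M ∈ ℝ^{n×n} is positive semidefinite and r ≥ 2. If x* with ‖x*‖₀ < s satisfies ∇f_r(x*) = 0, then x* is a global minimizer of f_r over the set S = {x : ‖x‖₀ ≤ s}; and if additionally fea(M,q) ≠ ∅, then x* ∈ sol(M,q) ∩ S. -/
/-!
At a stationary point `x` the derivative of `f_r` is `h ↦ ⟨u, h⟩ + ⟨v, M h⟩`, where `uᵢ` and `vᵢ`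
are the two partial derivatives of `φ_r` at `(xᵢ, (Mx+q)ᵢ)`. Testing against `h = v` gives
`⟨u, v⟩ = -⟨v, M v⟩ ≤ 0`, while every `uᵢ vᵢ` is nonnegative and vanishes only if `xᵢ ≤ 0` or
`(Mx+q)ᵢ ≤ 0`. At such a complementary point `f_r` agrees, value and derivative, with its convex
minorant `g(y) = (1/r) Σᵢ ((-yᵢ)₊^r + (-(My+q)ᵢ)₊^r)` (`negPartMerit`), so `x` minimizes `g`,
hence `f_r`, on all of `ℝⁿ`. Testing stationarity against `z - x` for a feasible `z` gives
`Σᵢ ((-xᵢ)₊^r + (-(Mx+q)ᵢ)₊^r) ≤ 0`, so `x` is feasible and, being complementary, solves the LCP.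
-/

open Matrix

/-- The feasible set of the LCP. -/
def feaSet {n : ℕ} (M : Matrix (Fin n) (Fin n) ℝ) (q : Fin n → ℝ) : Set (Fin n → ℝ) :=
  {x | (∀ i, 0 ≤ x i) ∧ (∀ i, 0 ≤ M.mulVec x i + q i)}

namespace Real

variable {r : ℝ}

lemma hasDerivAt_max_zero_rpow (hr : 1 < r) (t : ℝ) :
    HasDerivAt (fun s : ℝ => max s 0 ^ r) (r * max t 0 ^ (r - 1)) t := by
  have hr0 : r ≠ 0 := by positivity
  have hr1 : r - 1 ≠ 0 := by linarith
  rcases lt_trichotomy t 0 with ht | rfl | ht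
  · rw [max_eq_right ht.le, zero_rpow hr1, mul_zero]
    refine (hasDerivAt_const t 0).congr_of_eventuallyEq ?_
    filter_upwards [Iio_mem_nhds ht] with s hs
    rw [max_eq_right (le_of_lt hs), zero_rpow hr0]
  · rw [max_self, zero_rpow hr1, mul_zero, ← hasDerivWithinAt_univ, ← Set.Iic_union_Ici (a := 0)]
    refine HasDerivWithinAt.union ?_ ?_
    · refine (hasDerivWithinAt_const 0 _ 0).congr (fun s hs => ?_) (by simp [zero_rpow hr0])
      rw [max_eq_right (Set.mem_Iic.1 hs), zero_rpow hr0]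
    · have := (hasDerivAt_rpow_const (x := 0) (Or.inr hr.le)).hasDerivWithinAt (s := Set.Ici 0)
      rw [zero_rpow hr1, mul_zero] at this
      exact this.congr (fun s hs => by rw [max_eq_left (Set.mem_Ici.1 hs)]) (by rw [max_self])
  · rw [max_eq_left ht.le]
    refine (hasDerivAt_rpow_const (Or.inl ht.ne')).congr_of_eventuallyEq ?_
    filter_upwards [Ioi_mem_nhds ht] with s hs
    rw [max_eq_left (le_of_lt hs)]

lemma max_zero_rpow_sub_one_mul_self (hr : 1 < r) (t : ℝ) :
    max t 0 ^ (r - 1) * t = max t 0 ^ r := by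
  rcases le_total t 0 with ht | ht
  · rw [max_eq_right ht, zero_rpow (by linarith), zero_rpow (by positivity), zero_mul]
  · rw [max_eq_left ht]
    rcases ht.eq_or_lt with rfl | ht
    · rw [mul_zero, zero_rpow (by positivity)]
    · rw [← rpow_add_one ht.ne', sub_add_cancel]

lemma max_zero_rpow_sub_one_mul_sub_le (hr : 1 < r) (a s : ℝ) :
    max a 0 ^ (r - 1) * (s - a) ≤ (max s 0 ^ r - max a 0 ^ r) / r := by
  have hr0 : 0 < r := by positivity
  have hA : 0 ≤ max a 0 ^ (r - 1) := rpow_nonneg (le_max_right a 0) _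
  have young := young_inequality_of_nonneg hA (le_max_right s 0)
    (HolderConjugate.conjExponent hr).symm
  rw [← rpow_mul (le_max_right a 0), conjExponent, mul_div_cancel₀ _ (by linarith)] at young
  have hs : max a 0 ^ (r - 1) * s ≤ max a 0 ^ (r - 1) * max s 0 :=
    mul_le_mul_of_nonneg_left (le_max_left s 0) hA
  rw [mul_sub, max_zero_rpow_sub_one_mul_self hr, le_div_iff₀ hr0]
  rw [div_div_eq_mul_div, ← add_div, le_div_iff₀ hr0] at young
  nlinarith

lemma max_neg_zero_rpow_le_mul_sub {c : ℝ} (hr : 1 < r) (hc : 0 ≤ c) (t : ℝ) :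
    max (-t) 0 ^ r ≤ max (-t) 0 ^ (r - 1) * (c - t) := by
  have := max_zero_rpow_sub_one_mul_self hr (-t)
  have : 0 ≤ max (-t) 0 ^ (r - 1) * c := mul_nonneg (rpow_nonneg (le_max_right _ _) _) hc
  linarith [mul_sub (max (-t) 0 ^ (r - 1)) c t]

lemma max_neg_zero_rpow_eq_zero_iff {t : ℝ} (hr : r ≠ 0) : max (-t) 0 ^ r = 0 ↔ 0 ≤ t := by
  rw [rpow_eq_zero (le_max_right _ _) hr, max_eq_right_iff, neg_nonpos]

end Real

/-- `∂φ_r/∂a (a, b)`; by the symmetry of `φ_r`, `∂φ_r/∂b (a, b) = phiDeriv r b a`. -/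
noncomputable def phiDeriv (r a b : ℝ) : ℝ :=
  max a 0 ^ (r - 1) * max b 0 ^ r - max (-a) 0 ^ (r - 1)

section
variable {E : Type*} [NormedAddCommGroup E] [NormedSpace ℝ E] {r : ℝ} {f g : E → ℝ}
  {f' g' : E →L[ℝ] ℝ} {x : E}

theorem HasFDerivAt.phi (hr : 1 < r) (hf : HasFDerivAt f f' x) (hg : HasFDerivAt g g' x) :
    HasFDerivAt (fun y => phi r (f y) (g y))
      (phiDeriv r (f x) (g x) • f' + phiDeriv r (g x) (f x) • g') x := by
  have pos {h : E → ℝ} {h' : E →L[ℝ] ℝ} (hh : HasFDerivAt h h' x) :=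
    (Real.hasDerivAt_max_zero_rpow hr (h x)).comp_hasFDerivAt x hh
  have neg {h : E → ℝ} {h' : E →L[ℝ] ℝ} (hh : HasFDerivAt h h' x) :=
    (Real.hasDerivAt_max_zero_rpow hr (-h x)).comp_hasFDerivAt x hh.neg
  refine (((((pos hf).mul (pos hg)).add (neg hf)).add (neg hg)).const_mul (1 / r)).congr_fderiv ?_
  simp only [phiDeriv, Function.comp_apply]
  match_scalars <;> field_simp <;> ring

end

section
variable {r a b : ℝ}

lemma max_zero_rpow_mul_max_zero_rpow_eq_zero {p p' : ℝ} (hp : p ≠ 0) (hp' : p' ≠ 0)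
    (h : a ≤ 0 ∨ b ≤ 0) : max a 0 ^ p * max b 0 ^ p' = 0 := by
  rcases h with h | h
  · rw [max_eq_right h, Real.zero_rpow hp, zero_mul]
  · rw [max_eq_right h, Real.zero_rpow hp', mul_zero]

lemma phiDeriv_of_nonpos_or (hr : 1 < r) (h : a ≤ 0 ∨ b ≤ 0) :
    phiDeriv r a b = -max (-a) 0 ^ (r - 1) := by
  rw [phiDeriv, max_zero_rpow_mul_max_zero_rpow_eq_zero (by linarith) (by linarith) h, zero_sub]

lemma phi_of_nonpos_or (hr : r ≠ 0) (h : a ≤ 0 ∨ b ≤ 0) :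
    phi r a b = (max (-a) 0 ^ r + max (-b) 0 ^ r) / r := by
  rw [phi, max_zero_rpow_mul_max_zero_rpow_eq_zero hr hr h, zero_add, one_div_mul_eq_div,
    add_div]

lemma div_le_phi (hr : 0 < r) : (max (-a) 0 ^ r + max (-b) 0 ^ r) / r ≤ phi r a b := by
  have : 0 ≤ max a 0 ^ r * max b 0 ^ r :=
    mul_nonneg (Real.rpow_nonneg (le_max_right a 0) r) (Real.rpow_nonneg (le_max_right b 0) r)
  rw [phi, one_div_mul_eq_div]
  gcongr
  linarith

lemma phiDeriv_mul_phiDeriv_pos (hr : 1 < r) (ha : 0 < a) (hb : 0 < b) :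
    0 < phiDeriv r a b * phiDeriv r b a := by
  have hpos {c d : ℝ} (hc : 0 < c) (hd : 0 < d) : 0 < phiDeriv r c d := by
    rw [phiDeriv, max_eq_left hc.le, max_eq_left hd.le, max_eq_right (by linarith),
      Real.zero_rpow (by linarith), sub_zero]
    positivity
  exact mul_pos (hpos ha hb) (hpos hb ha)

lemma phiDeriv_mul_phiDeriv_nonneg (hr : 1 < r) : 0 ≤ phiDeriv r a b * phiDeriv r b a := by
  by_cases h : a ≤ 0 ∨ b ≤ 0
  · rw [phiDeriv_of_nonpos_or hr h, phiDeriv_of_nonpos_or hr h.symm, neg_mul_neg]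
    exact mul_nonneg (Real.rpow_nonneg (le_max_right _ _) _) (Real.rpow_nonneg (le_max_right _ _) _)
  · push Not at h
    exact (phiDeriv_mul_phiDeriv_pos hr h.1 h.2).le

lemma nonpos_or_nonpos_of_phiDeriv_mul_phiDeriv_nonpos (hr : 1 < r)
    (h : phiDeriv r a b * phiDeriv r b a ≤ 0) : a ≤ 0 ∨ b ≤ 0 := by
  by_contra! hab
  exact (phiDeriv_mul_phiDeriv_pos hr hab.1 hab.2).not_ge h

end

section
variable {n : ℕ} {r : ℝ} {M : Matrix (Fin n) (Fin n) ℝ} {q x : Fin n → ℝ}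

lemma fderiv_fr_apply (hr : 1 < r) (x h : Fin n → ℝ) :
    fderiv ℝ (fr r M q) x h = ∑ i, (phiDeriv r (x i) ((M *ᵥ x + q) i) * h i
      + phiDeriv r ((M *ᵥ x + q) i) (x i) * (M *ᵥ h) i) := by
  let L : (Fin n → ℝ) →L[ℝ] (Fin n → ℝ) := LinearMap.toContinuousLinearMap (Matrix.toLin' M)
  have hw : HasFDerivAt (fun y => M *ᵥ y + q) L x := L.hasFDerivAt.add_const q
  have hfr : HasFDerivAt (fr r M q) _ x := HasFDerivAt.fun_sum (u := Finset.univ) fun i _ =>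
    (hasFDerivAt_apply i x).phi hr (hasFDerivAt_pi'.1 hw i)
  rw [hfr.fderiv]
  simp [L]

noncomputable def negPartMerit (r : ℝ) (M : Matrix (Fin n) (Fin n) ℝ) (q x : Fin n → ℝ) : ℝ :=
  ∑ i, (max (-x i) 0 ^ r + max (-(M *ᵥ x + q) i) 0 ^ r) / r

lemma negPartMerit_le_fr (hr : 0 < r) (x : Fin n → ℝ) : negPartMerit r M q x ≤ fr r M q x :=
  Finset.sum_le_sum fun _ _ => div_le_phi hr

lemma fr_eq_negPartMerit (hr : r ≠ 0) (hx : ∀ i, x i ≤ 0 ∨ (M *ᵥ x + q) i ≤ 0) :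
    fr r M q x = negPartMerit r M q x :=
  Finset.sum_congr rfl fun i _ => phi_of_nonpos_or hr (hx i)

lemma fderiv_fr_apply_of_complementary (hr : 1 < r) (hx : ∀ i, x i ≤ 0 ∨ (M *ᵥ x + q) i ≤ 0)
    (h : Fin n → ℝ) :
    fderiv ℝ (fr r M q) x h = -∑ i, (max (-x i) 0 ^ (r - 1) * h i
      + max (-(M *ᵥ x + q) i) 0 ^ (r - 1) * (M *ᵥ h) i) := by
  rw [fderiv_fr_apply hr, ← Finset.sum_neg_distrib]
  refine Finset.sum_congr rfl fun i _ => ?_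
  rw [phiDeriv_of_nonpos_or hr (hx i), phiDeriv_of_nonpos_or hr (hx i).symm]
  ring

lemma complementary_of_fderiv_fr_eq_zero (hr : 1 < r) (hM : ∀ v, 0 ≤ v ⬝ᵥ M *ᵥ v)
    (hx : fderiv ℝ (fr r M q) x = 0) (i : Fin n) : x i ≤ 0 ∨ (M *ᵥ x + q) i ≤ 0 := by
  set v : Fin n → ℝ := fun j => phiDeriv r ((M *ᵥ x + q) j) (x j)
  have hvMv : 0 ≤ ∑ j, phiDeriv r ((M *ᵥ x + q) j) (x j) * (M *ᵥ v) j := hM v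
  have huv : ∑ j, phiDeriv r (x j) ((M *ᵥ x + q) j) * v j ≤ 0 := by
    have h0 := fderiv_fr_apply (M := M) (q := q) hr x v
    rw [hx, _root_.zero_apply, Finset.sum_add_distrib] at h0
    linarith
  refine nonpos_or_nonpos_of_phiDeriv_mul_phiDeriv_nonpos hr ?_
  exact (Finset.single_le_sum (fun j _ => phiDeriv_mul_phiDeriv_nonneg hr)
    (Finset.mem_univ i)).trans huv

lemma fr_add_fderiv_le_negPartMerit (hr : 1 < r) (hx : ∀ i, x i ≤ 0 ∨ (M *ᵥ x + q) i ≤ 0)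
    (y : Fin n → ℝ) : fr r M q x + fderiv ℝ (fr r M q) x (y - x) ≤ negPartMerit r M q y := by
  rw [fr_eq_negPartMerit (by positivity) hx, fderiv_fr_apply_of_complementary hr hx,
    negPartMerit, negPartMerit, ← sub_eq_add_neg, ← Finset.sum_sub_distrib]
  refine Finset.sum_le_sum fun i _ => ?_
  have hx_tangent := Real.max_zero_rpow_sub_one_mul_sub_le hr (-x i) (-y i)
  have hw_tangent := Real.max_zero_rpow_sub_one_mul_sub_le hr (-(M *ᵥ x + q) i) (-(M *ᵥ y + q) i)
  simp only [mulVec_sub, Pi.sub_apply, Pi.add_apply] at hx_tangent hw_tangent ⊢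
  rw [add_div, add_div]
  linear_combination hx_tangent + hw_tangent

lemma sum_max_neg_zero_rpow_le_neg_fderiv_fr (hr : 1 < r)
    (hx : ∀ i, x i ≤ 0 ∨ (M *ᵥ x + q) i ≤ 0) {z : Fin n → ℝ} (hz : z ∈ feaSet M q) :
    ∑ i, (max (-x i) 0 ^ r + max (-(M *ᵥ x + q) i) 0 ^ r) ≤
      -fderiv ℝ (fr r M q) x (z - x) := by
  rw [fderiv_fr_apply_of_complementary hr hx, neg_neg]
  refine Finset.sum_le_sum fun i _ => add_le_add ?_ ?_
  · exact Real.max_neg_zero_rpow_le_mul_sub hr (hz.1 i) (x i)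
  · have hMz : (M *ᵥ (z - x)) i = (M *ᵥ z + q) i - (M *ᵥ x + q) i := by
      simp only [mulVec_sub, Pi.sub_apply, Pi.add_apply]
      ring
    rw [hMz]
    exact Real.max_neg_zero_rpow_le_mul_sub hr (hz.2 i) _

theorem fr_le_fr_of_fderiv_eq_zero (hr : 1 < r) (hM : ∀ v, 0 ≤ v ⬝ᵥ M *ᵥ v)
    (hx : fderiv ℝ (fr r M q) x = 0) (y : Fin n → ℝ) : fr r M q x ≤ fr r M q y :=
  calc fr r M q x = fr r M q x + fderiv ℝ (fr r M q) x (y - x) := by simp [hx]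
    _ ≤ negPartMerit r M q y :=
      fr_add_fderiv_le_negPartMerit hr (complementary_of_fderiv_fr_eq_zero hr hM hx) y
    _ ≤ fr r M q y := negPartMerit_le_fr (by positivity) y

theorem mem_solSet_of_fderiv_eq_zero (hr : 1 < r) (hM : ∀ v, 0 ≤ v ⬝ᵥ M *ᵥ v)
    (hx : fderiv ℝ (fr r M q) x = 0) (hfea : (feaSet M q).Nonempty) : x ∈ solSet M q := by
  obtain ⟨z, hz⟩ := hfea
  have hcompl := complementary_of_fderiv_fr_eq_zero hr hM hx
  have hsum : ∑ i, (max (-x i) 0 ^ r + max (-(M *ᵥ x + q) i) 0 ^ r) ≤ 0 := by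
    simpa [hx] using sum_max_neg_zero_rpow_le_neg_fderiv_fr hr hcompl hz
  have hnonneg (i : Fin n) : 0 ≤ x i ∧ 0 ≤ (M *ᵥ x + q) i := by
    have hterm := (Finset.sum_eq_zero_iff_of_nonneg (fun j _ => by positivity)).1
      (le_antisymm hsum (by positivity)) i (Finset.mem_univ i)
    rw [add_eq_zero_iff_of_nonneg (by positivity) (by positivity),
      Real.max_neg_zero_rpow_eq_zero_iff (by positivity),
      Real.max_neg_zero_rpow_eq_zero_iff (by positivity)] at hterm
    exact hterm
  refine ⟨fun i => (hnonneg i).1, fun i => (hnonneg i).2, Finset.sum_eq_zero fun i _ => ?_⟩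
  rcases hcompl i with h | h
  · exact mul_eq_zero_of_left (le_antisymm h (hnonneg i).1) _
  · exact mul_eq_zero_of_right _ (le_antisymm h (hnonneg i).2)

end

theorem stmt_18 {n : ℕ} (s : ℕ) (r : ℝ) (hr : 2 ≤ r)
    (M : Matrix (Fin n) (Fin n) ℝ) (q : Fin n → ℝ)
    (hpsd : ∀ x : Fin n → ℝ, 0 ≤ ∑ i, x i * M.mulVec x i)
    (x' : Fin n → ℝ) (hx's : zeroNorm x' < s) (hstat : fderiv ℝ (fr r M q) x' = 0) :
    (∀ x : Fin n → ℝ, zeroNorm x ≤ s → fr r M q x' ≤ fr r M q x) ∧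
    ((feaSet M q).Nonempty → x' ∈ solSet M q ∧ zeroNorm x' ≤ s) := by
  have hr : 1 < r := by linarith
  exact ⟨fun x _ => fr_le_fr_of_fderiv_eq_zero hr hpsd hstat x,
    fun hfea => ⟨mem_solSet_of_fderiv_eq_zero hr hpsd hstat hfea, hx's.le⟩⟩
end
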